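/- Let (Ω, μ) be a measure space, Ψ : Ω → ℝ a measurable function, and C ≥ 0 a constant. Suppose (w_m)_{m ∈ ℕ} is a sequence in L²(μ; ℂ) such that ∫_Ω e^{m·Ψ(x)} |w_m(x)|² dμ(x) ≤ C for every m, and suppose w_m converges weakly in L²(μ; ℂ) to some w, i.e. ⟨w_m, g⟩_{L²} → ⟨w, g⟩_{L²} for every g ∈ L²(μ; ℂ). Then w = 0 μ-almost everywhere on the set {x ∈ Ω : Ψ(x) > 0}. -/

import Mathlib

/-!
On `A = {Ψ > 0}` the weighted Cauchy–Schwarz inequality gives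
`|⟨w_m, 1_A w⟩| ≤ (∫ e^{mΨ} |w_m|²)^{1/2} (∫_A e^{-mΨ} |w|²)^{1/2} ≤ √C (∫_A e^{-mΨ} |w|²)^{1/2}`,
and the last integral tends to `0` by dominated convergence. Hence
`∫_A |w|² = ⟨w, 1_A w⟩ = lim ⟨w_m, 1_A w⟩ = 0`.
-/

open MeasureTheory Filter ENNReal Topology

section

variable {Ω : Type*} [MeasurableSpace Ω] {μ : Measure Ω}

theorem ofReal_exp_half_mul_rpow_two (a : ℝ) (y : ℝ≥0∞) :
    (ENNReal.ofReal (Real.exp (a / 2)) * y) ^ (2 : ℝ) = ENNReal.ofReal (Real.exp a) * y ^ 2 := by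
  rw [ENNReal.rpow_two, mul_pow, ← ENNReal.ofReal_pow (Real.exp_nonneg _), ← Real.exp_nat_mul]
  norm_num [mul_div_cancel₀]

theorem lintegral_mul_le_exp_weighted {φ : Ω → ℝ} (hφ : AEMeasurable φ μ) {f g : Ω → ℝ≥0∞}
    (hf : AEMeasurable f μ) (hg : AEMeasurable g μ) :
    ∫⁻ x, f x * g x ∂μ ≤ (∫⁻ x, ENNReal.ofReal (Real.exp (φ x)) * f x ^ 2 ∂μ) ^ (1 / 2 : ℝ) *
      (∫⁻ x, ENNReal.ofReal (Real.exp (-φ x)) * g x ^ 2 ∂μ) ^ (1 / 2 : ℝ) := by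
  have hsplit : ∀ x, f x * g x = (ENNReal.ofReal (Real.exp (φ x / 2)) * f x) *
      (ENNReal.ofReal (Real.exp (-φ x / 2)) * g x) := fun x => by
    rw [mul_mul_mul_comm, ← ENNReal.ofReal_mul (Real.exp_nonneg _), ← Real.exp_add, neg_div,
      add_neg_cancel, Real.exp_zero, ENNReal.ofReal_one, one_mul]
  have hmeas : ∀ ψ : Ω → ℝ, AEMeasurable ψ μ →
      AEMeasurable (fun x => ENNReal.ofReal (Real.exp (ψ x / 2))) μ := fun ψ hψ => by fun_prop
  simp_rw [hsplit]
  convert ENNReal.lintegral_mul_le_Lp_mul_Lq μ Real.HolderConjugate.two_two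
    ((hmeas φ hφ).mul hf) ((hmeas _ hφ.neg).mul hg) using 4 with x <;>
    simp only [Pi.mul_apply, Pi.neg_apply, ofReal_exp_half_mul_rpow_two]

theorem tendsto_setLIntegral_exp_neg_mul_zero {Ψ : Ω → ℝ} (hΨ : Measurable Ψ) {f : Ω → ℝ≥0∞}
    (hf : AEMeasurable f μ) (hf_fin : ∫⁻ x, f x ∂μ ≠ ∞) :
    Tendsto (fun m : ℕ => ∫⁻ x in {x | 0 < Ψ x}, ENNReal.ofReal (Real.exp (-(m * Ψ x))) * f x ∂μ)
      atTop (𝓝 0) := by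
  have hA : MeasurableSet {x | 0 < Ψ x} := measurableSet_lt measurable_const hΨ
  have hf_finA : ∫⁻ x in {x | 0 < Ψ x}, f x ∂μ ≠ ∞ :=
    ne_top_of_le_ne_top hf_fin (setLIntegral_le_lintegral _ _)
  have hmeas : ∀ m : ℕ, AEMeasurable
      (fun x => ENNReal.ofReal (Real.exp (-(m * Ψ x))) * f x) (μ.restrict {x | 0 < Ψ x}) :=
    fun m => by fun_prop
  have hle : ∀ m : ℕ, (fun x => ENNReal.ofReal (Real.exp (-(m * Ψ x))) * f x)
      ≤ᵐ[μ.restrict {x | 0 < Ψ x}] f := by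
    refine fun m => (ae_restrict_iff' hA).2 (Eventually.of_forall fun x hx => ?_)
    have : -(m * Ψ x) ≤ 0 := neg_nonpos.2 (mul_nonneg m.cast_nonneg (le_of_lt hx))
    exact mul_le_of_le_one_left' (ENNReal.ofReal_le_one.2 (Real.exp_le_one_iff.2 this))
  have hlim : ∀ᵐ x ∂μ.restrict {x | 0 < Ψ x},
      Tendsto (fun m : ℕ => ENNReal.ofReal (Real.exp (-(m * Ψ x))) * f x) atTop (𝓝 0) := by
    filter_upwards [ae_restrict_mem hA, ae_lt_top' hf.restrict hf_finA] with x hx hfx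
    have hexp : Tendsto (fun m : ℕ => ENNReal.ofReal (Real.exp (-(m * Ψ x)))) atTop (𝓝 0) := by
      simpa using ENNReal.tendsto_ofReal (Real.tendsto_exp_atBot.comp
        (tendsto_neg_atTop_atBot.comp (tendsto_natCast_atTop_atTop.atTop_mul_const hx)))
    simpa using ENNReal.Tendsto.mul_const hexp (Or.inr hfx.ne)
  simpa using tendsto_lintegral_of_dominated_convergence' f hmeas hle hf_finA hlim

theorem tendsto_setLIntegral_enorm_mul_zero {E F : Type*} [NormedAddCommGroup E]
    [NormedAddCommGroup F] {Ψ : Ω → ℝ} (hΨ : Measurable Ψ) {w : ℕ → Ω → E}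
    (hw : ∀ m, AEStronglyMeasurable (w m) μ) {g : Ω → F} (hg : MemLp g 2 μ) {B : ℝ≥0∞}
    (hB : B ≠ ∞)
    (hbound : ∀ m : ℕ, ∫⁻ x, ENNReal.ofReal (Real.exp (m * Ψ x)) * ‖w m x‖ₑ ^ 2 ∂μ ≤ B) :
    Tendsto (fun m : ℕ => ∫⁻ x in {x | 0 < Ψ x}, ‖w m x‖ₑ * ‖g x‖ₑ ∂μ) atTop (𝓝 0) := by
  have hg_fin : ∫⁻ x, ‖g x‖ₑ ^ 2 ∂μ ≠ ∞ := by
    simpa using (lintegral_rpow_enorm_lt_top_of_eLpNorm_lt_top two_ne_zero ofNat_ne_top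
      hg.eLpNorm_lt_top).ne
  have hdecay := tendsto_setLIntegral_exp_neg_mul_zero hΨ
    (hg.aestronglyMeasurable.enorm.pow_const 2) hg_fin
  have hle : ∀ m : ℕ, ∫⁻ x in {x | 0 < Ψ x}, ‖w m x‖ₑ * ‖g x‖ₑ ∂μ ≤ B ^ (1 / 2 : ℝ) *
      (∫⁻ x in {x | 0 < Ψ x}, ENNReal.ofReal (Real.exp (-(m * Ψ x))) * ‖g x‖ₑ ^ 2 ∂μ) ^
        (1 / 2 : ℝ) :=
    fun m => (lintegral_mul_le_exp_weighted (hΨ.const_mul m).aemeasurable (hw m).enorm.restrict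
      hg.aestronglyMeasurable.enorm.restrict).trans
        (by gcongr; exact (setLIntegral_le_lintegral _ _).trans (hbound m))
  have hbound_lim : Tendsto (fun m : ℕ => B ^ (1 / 2 : ℝ) *
      (∫⁻ x in {x | 0 < Ψ x}, ENNReal.ofReal (Real.exp (-(m * Ψ x))) * ‖g x‖ₑ ^ 2 ∂μ) ^
        (1 / 2 : ℝ)) atTop (𝓝 0) := by
    have hsqrt : Tendsto (fun t : ℝ≥0∞ => t ^ (1 / 2 : ℝ)) (𝓝 0) (𝓝 0) := by
      simpa using (ENNReal.continuous_rpow_const (y := 1 / 2)).tendsto 0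
    simpa using ENNReal.Tendsto.const_mul (hsqrt.comp hdecay)
      (Or.inr (rpow_ne_top_of_nonneg (by norm_num) hB))
  exact tendsto_of_tendsto_of_tendsto_of_le_of_le tendsto_const_nhds hbound_lim
    (fun _ => zero_le) hle

variable {𝕜 : Type*} [RCLike 𝕜]

theorem enorm_integral_mul_conj_indicator_le {A : Set Ω} (hA : MeasurableSet A) (f g : Ω → 𝕜) :
    ‖∫ x, f x * starRingEnd 𝕜 (A.indicator g x) ∂μ‖ₑ ≤ ∫⁻ x in A, ‖f x‖ₑ * ‖g x‖ₑ ∂μ := by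
  refine (enorm_integral_le_lintegral_enorm _).trans_eq ?_
  rw [← lintegral_indicator hA]
  congr 1 with x
  by_cases hx : x ∈ A <;> simp [hx]

theorem ae_eq_zero_of_integral_mul_conj_indicator_self_eq_zero {A : Set Ω} (hA : MeasurableSet A)
    {f : Ω → 𝕜} (hf : MemLp f 2 μ) (h : ∫ x, f x * starRingEnd 𝕜 (A.indicator f x) ∂μ = 0) :
    ∀ᵐ x ∂μ, x ∈ A → f x = 0 := by
  have hsq : ∫ x in A, ‖f x‖ ^ 2 ∂μ = 0 := by
    rw [← RCLike.ofReal_eq_zero (K := 𝕜), ← integral_ofReal, ← integral_indicator hA, ← h]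
    congr 1 with x
    by_cases hx : x ∈ A <;> simp [hx, RCLike.mul_conj]
  have hint : Integrable (fun x => ‖f x‖ ^ 2) μ := hf.integrable_norm_pow two_ne_zero
  have := (integral_eq_zero_iff_of_nonneg (fun x => by positivity) hint.restrict).1 hsq
  rw [EventuallyEq, ae_restrict_iff' hA] at this
  filter_upwards [this] with x hx hxA
  simpa using hx hxA

end

theorem stmt_3_general {Ω : Type*} [MeasurableSpace Ω] (μ : Measure Ω)
    (Ψ : Ω → ℝ) (hΨ : Measurable Ψ) (C : ℝ)
    (w : ℕ → Ω → ℂ) (wlim : Ω → ℂ)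
    (hw : ∀ m, MemLp (w m) 2 μ) (hwlim : MemLp wlim 2 μ)
    (hbound : ∀ m : ℕ,
      ∫⁻ x, ENNReal.ofReal (Real.exp (m * Ψ x)) * (‖w m x‖₊ : ℝ≥0∞) ^ 2 ∂μ
        ≤ ENNReal.ofReal C)
    (hweak : ∀ g : Ω → ℂ, MemLp g 2 μ →
      Tendsto (fun m => ∫ x, w m x * (starRingEnd ℂ) (g x) ∂μ) atTop
        (nhds (∫ x, wlim x * (starRingEnd ℂ) (g x) ∂μ))) :
    ∀ᵐ x ∂μ, 0 < Ψ x → wlim x = 0 := by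
  set A := {x | 0 < Ψ x}
  have hA : MeasurableSet A := measurableSet_lt measurable_const hΨ
  have hsmall := tendsto_setLIntegral_enorm_mul_zero hΨ (fun m => (hw m).aestronglyMeasurable)
    hwlim ofReal_ne_top hbound
  have hto0 : Tendsto (fun m => ∫ x, w m x * starRingEnd ℂ (A.indicator wlim x) ∂μ) atTop (𝓝 0) :=
    tendsto_zero_iff_enorm_tendsto_zero.2 <| tendsto_of_tendsto_of_tendsto_of_le_of_le
      tendsto_const_nhds hsmall (fun _ => zero_le)
      (fun m => enorm_integral_mul_conj_indicator_le hA _ _)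
  exact ae_eq_zero_of_integral_mul_conj_indicator_self_eq_zero hA hwlim
    (tendsto_nhds_unique (hweak _ (hwlim.indicator hA)) hto0)

/-- The measure-theoretic step in the proof of the Approximation Lemma 4.7
of the paper: if `∫ e^{mΨ} |w_m|² dμ ≤ C` for all `m` and `w_m → w` weakly in
`L²(μ)`, then `w = 0` a.e. on the set `{Ψ > 0}`. -/
theorem stmt_3 {Ω : Type*} [MeasurableSpace Ω] (μ : Measure Ω)
    (Ψ : Ω → ℝ) (hΨ : Measurable Ψ) (C : ℝ) (hC : 0 ≤ C)
    (w : ℕ → Ω → ℂ) (wlim : Ω → ℂ)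
    (hw : ∀ m, MemLp (w m) 2 μ) (hwlim : MemLp wlim 2 μ)
    (hbound : ∀ m : ℕ,
      ∫⁻ x, ENNReal.ofReal (Real.exp (m * Ψ x)) * (‖w m x‖₊ : ℝ≥0∞) ^ 2 ∂μ
        ≤ ENNReal.ofReal C)
    (hweak : ∀ g : Ω → ℂ, MemLp g 2 μ →
      Tendsto (fun m => ∫ x, w m x * (starRingEnd ℂ) (g x) ∂μ) atTop
        (nhds (∫ x, wlim x * (starRingEnd ℂ) (g x) ∂μ))) :
    ∀ᵐ x ∂μ, 0 < Ψ x → wlim x = 0 :=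
  stmt_3_general μ Ψ hΨ C w wlim hw hwlim hbound hweak
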